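/- arXiv:1405.5300 — 9 statements merged into one kernel-verified Lean document; each statement's English description precedes it below -/
import Mathlib

section
/- Let c, s be positive integers and index coordinates by pairs (l,i) ∈ {1,…,c} × {1,…,s} (c blocks each of size s; total dimension d = c·s). Let a ∈ ℝ^d be nonzero and for each block l write a^{(l)} = (a_{(l,i)})_{i=1}^s. Let ω' = #{l : a^{(l)} ≠ 0} be the number of blocks on which a has a nonzero entry. Then the supremum of (∑_{l=1}^c ∑_{i=1}^s a_{(l,i)} x_{(l,i)})² over all x ∈ ℝ^d satisfying ∑_{l=1}^c (∑_{i=1}^s a_{(l,i)} x_{(l,i)})² ≤ 1 equals ω' (and the supremum is attained). -/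
/-!
Both quantities depend on `x` only through the block sums `t l = ∑ i, a (l, i) * x (l, i)`, and
every `t` vanishing on the blocks where `a` vanishes is realized by some `x`. So one maximizes
`(∑ l, t l) ^ 2` subject to `∑ l, t l ^ 2 ≤ 1` over `t` supported on the `ω'` active blocks:
Cauchy–Schwarz bounds it by `ω'`, with equality for `t l = 1 / √ω'` on every active block.
-/

open Finset

lemma exists_sum_mul_eq_of_ne_zero {ι : Type*} [Fintype ι] {v : ι → ℝ} (hv : v ≠ 0) (t : ℝ) :
    ∃ y : ι → ℝ, ∑ i, v i * y i = t := by
  have hvv : ∑ i, v i * v i ≠ 0 := fun h => hv (dotProduct_self_eq_zero.mp h)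
  refine ⟨fun i => t / (∑ j, v j * v j) * v i, ?_⟩
  simp_rw [mul_left_comm (v _) (t / _), ← mul_sum]
  exact div_mul_cancel₀ t hvv

lemma exists_block_sums_eq {κ ι : Type*} [Fintype ι] (a : κ × ι → ℝ) (b : κ → ℝ)
    (hb : ∀ l, (∀ i, a (l, i) = 0) → b l = 0) :
    ∃ x : κ × ι → ℝ, ∀ l, ∑ i, a (l, i) * x (l, i) = b l := by
  have hblock : ∀ l, ∃ y : ι → ℝ, ∑ i, a (l, i) * y i = b l := by
    intro l
    by_cases h : ∀ i, a (l, i) = 0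
    · exact ⟨0, by simp [h, hb l h]⟩
    · exact exists_sum_mul_eq_of_ne_zero (fun hv => h (congrFun hv)) (b l)
  choose y hy using hblock
  exact ⟨fun p => y p.1 p.2, hy⟩

lemma sq_sum_le_card_mul_sum_sq_of_support_subset {κ : Type*} [Fintype κ] {S : Finset κ}
    {b : κ → ℝ} (hb : ∀ l ∉ S, b l = 0) : (∑ l, b l) ^ 2 ≤ #S * ∑ l, b l ^ 2 := by
  rw [← sum_subset (subset_univ S) fun l _ hl => hb l hl]
  calc (∑ l ∈ S, b l) ^ 2 ≤ #S * ∑ l ∈ S, b l ^ 2 := sq_sum_le_card_mul_sum_sq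
    _ ≤ #S * ∑ l, b l ^ 2 := by
      gcongr
      exact subset_univ S

theorem stmt_1_general (c s : ℕ)
    (a : Fin c × Fin s → ℝ) (ha : a ≠ 0) :
    IsGreatest
      {y : ℝ | ∃ x : Fin c × Fin s → ℝ,
        (∑ l : Fin c, (∑ i : Fin s, a (l, i) * x (l, i)) ^ 2) ≤ 1 ∧
        y = (∑ l : Fin c, ∑ i : Fin s, a (l, i) * x (l, i)) ^ 2}
      ((Finset.univ.filter fun l : Fin c => ∃ i : Fin s, a (l, i) ≠ 0).card : ℝ) := by
  set S := univ.filter fun l : Fin c => ∃ i : Fin s, a (l, i) ≠ 0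
  have hinactive : ∀ l ∉ S, ∀ i, a (l, i) = 0 := by simp [S]
  have hω : (0 : ℝ) < #S := by
    obtain ⟨⟨l, i⟩, h⟩ := Function.ne_iff.mp ha
    exact_mod_cast card_pos.mpr ⟨l, by simpa [S] using ⟨i, h⟩⟩
  constructor
  · obtain ⟨x, hx⟩ := exists_block_sums_eq a (fun l => if l ∈ S then (√(#S : ℝ))⁻¹ else 0)
      fun l h => if_neg fun hl => by simp [S, h] at hl
    refine ⟨x, ?_, ?_⟩ <;> simp only [hx]
    · simp [sum_ite_mem, hω.ne']
    · simp only [sum_ite_mem, univ_inter, sum_const, nsmul_eq_mul]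
      rw [mul_pow, inv_pow, Real.sq_sqrt hω.le]
      field_simp
  · rintro _ ⟨x, hx, rfl⟩
    calc _ ≤ #S * ∑ l, (∑ i, a (l, i) * x (l, i)) ^ 2 :=
          sq_sum_le_card_mul_sum_sq_of_support_subset fun l hl => by simp [hinactive l hl]
      _ ≤ #S := mul_le_of_le_one_right hω.le hx

/-- Coordinates are indexed by pairs `(l,i) ∈ Fin c × Fin s`
(`c` blocks each of size `s`).  For a nonzero vector `a`, with `ω'` the number of
blocks on which `a` has a nonzero entry, the supremum of
`(∑ l, ∑ i, a (l,i) * x (l,i))^2` over all `x` with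
`∑ l, (∑ i, a (l,i) * x (l,i))^2 ≤ 1` equals `ω'`, and it is attained. -/
theorem stmt_1 (c s : ℕ) (hc : 0 < c) (hs : 0 < s)
    (a : Fin c × Fin s → ℝ) (ha : a ≠ 0) :
    IsGreatest
      {y : ℝ | ∃ x : Fin c × Fin s → ℝ,
        (∑ l : Fin c, (∑ i : Fin s, a (l, i) * x (l, i)) ^ 2) ≤ 1 ∧
        y = (∑ l : Fin c, ∑ i : Fin s, a (l, i) * x (l, i)) ^ 2}
      ((Finset.univ.filter fun l : Fin c => ∃ i : Fin s, a (l, i) ≠ 0).card : ℝ) :=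
  stmt_1_general c s a ha
end

section
/- Let c, s, τ be positive integers with τ ≤ s, and set d = c·s, s₁ = max(1, s−1), α₁ = 1 − (τ−1)/s₁, α₂ = (τ−1)/s₁, α₃ = τ/s − (τ−1)/s₁. Let G be any d×d real matrix and x ∈ ℝ^d. Then the average, over all tuples S = (S_1,…,S_c) where each S_l is a τ-element subset of block l, of the quantity (x^Ŝ)ᵀ G x^Ŝ equals (τ/s)·[α₁ xᵀD^G x + α₂ xᵀG x + α₃ xᵀ(G − B^G)x]. -/
open Finset

/-- The finite set of all distributed samplings: tuples `S = (S_1,…,S_c)` where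
each `S_l` is a `τ`-element subset of the block `{1,…,s}`. -/
def samplings (c s τ : ℕ) : Finset (Fin c → Finset (Fin s)) :=
  Finset.univ.filter fun S => ∀ l, (S l).card = τ

/-- `x^Ŝ`: the vector agreeing with `x` on `Ŝ = {(l,i) : i ∈ S_l}` and `0` elsewhere. -/
def restr {c s : ℕ} (S : Fin c → Finset (Fin s)) (x : Fin c × Fin s → ℝ) :
    Fin c × Fin s → ℝ :=
  fun p => if p.2 ∈ S p.1 then x p else 0

/-
A product of two masked coordinates survives exactly when both coordinates are sampled, so the
average of `(x^Ŝ)ᵀ G x^Ŝ` is `∑ p q, P(p, q ∈ Ŝ) x_p G_pq x_q`. The blocks are sampled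
independently, and inside one block the `τ`-subsets of an `s`-set containing a fixed `k`-set make
up the fraction `τ⁽ᵏ⁾ / s⁽ᵏ⁾` of all of them (falling factorials). Hence `P(p, q ∈ Ŝ)` is `τ/s`
for `p = q`, `τ(τ-1)/(s(s-1))` for distinct coordinates of one block and `(τ/s)²` for coordinates
of different blocks, and regrouping the double sum by these three cases gives the formula.
-/

section SubsetCount

variable {α : Type*} [DecidableEq α] {u t : Finset α}

theorem card_filter_powersetCard_subset_mul_descFactorial (hut : u ⊆ t) (n : ℕ) :
    #{A ∈ t.powersetCard n | u ⊆ A} * (#t).descFactorial #u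
      = n.descFactorial #u * (#t).choose n := by
  rcases lt_or_ge n #u with hn | hn
  · have hempty : {A ∈ t.powersetCard n | u ⊆ A} = ∅ :=
      filter_eq_empty_iff.2 fun A hA huA =>
        (card_le_card huA).not_gt ((mem_powersetCard.1 hA).2 ▸ hn)
    rw [hempty, Nat.descFactorial_eq_zero_iff_lt.2 hn]
    simp
  · rw [card_filter_powersetCard_subset u t n hut hn, Nat.descFactorial_eq_factorial_mul_choose,
      Nat.descFactorial_eq_factorial_mul_choose, mul_assoc, mul_comm (n.choose #u),
      Nat.choose_mul hn]
    ring

theorem card_filter_powersetCard_subset_div (hut : u ⊆ t) {n : ℕ} (hn : n ≤ #t) :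
    (#{A ∈ t.powersetCard n | u ⊆ A} : ℝ) / (#t).choose n
      = n.descFactorial #u / (#t).descFactorial #u := by
  rw [div_eq_div_iff (by exact_mod_cast (Nat.choose_pos hn).ne')
    (by exact_mod_cast (Nat.descFactorial_pos.2 (card_le_card hut)).ne')]
  exact_mod_cast card_filter_powersetCard_subset_mul_descFactorial hut n

end SubsetCount

theorem card_filter_powersetCard_univ_div {s τ : ℕ} (hτs : τ ≤ s) (P : Finset (Fin s) → Prop)
    [DecidablePred P] (u : Finset (Fin s)) (hP : ∀ A, P A ↔ u ⊆ A) :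
    (#{A ∈ (univ : Finset (Fin s)).powersetCard τ | P A} : ℝ) / s.choose τ
      = τ.descFactorial #u / s.descFactorial #u := by
  have h := card_filter_powersetCard_subset_div (subset_univ u) (n := τ) (by simpa using hτs)
  rwa [card_univ, Fintype.card_fin, ← filter_congr fun A _ => hP A] at h

section PairInclusion

variable {c s τ : ℕ}

noncomputable def pairInclusionProb (c s τ : ℕ) (p q : Fin c × Fin s) : ℝ :=
  #{S ∈ samplings c s τ | p.2 ∈ S p.1 ∧ q.2 ∈ S q.1} / (s.choose τ : ℝ) ^ c

theorem sum_samplings_div_eq_sum_pairInclusionProb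
    (G : Matrix (Fin c × Fin s) (Fin c × Fin s) ℝ) (x : Fin c × Fin s → ℝ) :
    (∑ S ∈ samplings c s τ, ∑ p, ∑ q, restr S x p * G p q * restr S x q) / (s.choose τ : ℝ) ^ c
      = ∑ p, ∑ q, pairInclusionProb c s τ p q * (x p * G p q * x q) := by
  rw [sum_comm, sum_div]
  refine sum_congr rfl fun p _ => ?_
  rw [sum_comm, sum_div]
  refine sum_congr rfl fun q _ => ?_
  have hmask : ∀ S : Fin c → Finset (Fin s), restr S x p * G p q * restr S x q
      = if p.2 ∈ S p.1 ∧ q.2 ∈ S q.1 then x p * G p q * x q else 0 := by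
    intro S
    unfold restr
    split_ifs <;> simp_all
  rw [sum_congr rfl fun S _ => hmask S, sum_ite, sum_const_zero, add_zero, sum_const,
    nsmul_eq_mul, pairInclusionProb, div_mul_eq_mul_div]

theorem pairInclusionProb_eq_prod (p q : Fin c × Fin s) :
    pairInclusionProb c s τ p q
      = ∏ l, (#{A ∈ (univ : Finset (Fin s)).powersetCard τ |
          (p.1 = l → p.2 ∈ A) ∧ (q.1 = l → q.2 ∈ A)} : ℝ) / s.choose τ := by
  have hevent : {S ∈ samplings c s τ | p.2 ∈ S p.1 ∧ q.2 ∈ S q.1}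
      = Fintype.piFinset fun l => {A ∈ (univ : Finset (Fin s)).powersetCard τ |
          (p.1 = l → p.2 ∈ A) ∧ (q.1 = l → q.2 ∈ A)} := by
    ext S
    simp [samplings, Fintype.mem_piFinset, forall_and]
  rw [pairInclusionProb, hevent, Fintype.card_piFinset, Nat.cast_prod, prod_div_distrib,
    prod_const, card_univ, Fintype.card_fin]

variable (hτs : τ ≤ s)
include hτs

theorem pairInclusionProb_self (p : Fin c × Fin s) :
    pairInclusionProb c s τ p p = τ / s := by
  rw [pairInclusionProb_eq_prod, Fintype.prod_eq_single p.1 fun l hl => by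
    rw [card_filter_powersetCard_univ_div hτs _ ∅ (by simp [Ne.symm hl])]
    simp]
  rw [card_filter_powersetCard_univ_div hτs _ {p.2} (by simp)]
  simp

theorem pairInclusionProb_of_ne_of_fst_eq {p q : Fin c × Fin s} (hpq : p ≠ q) (hb : p.1 = q.1) :
    pairInclusionProb c s τ p q = τ / s * ((τ - 1) / ((max 1 (s - 1) : ℕ) : ℝ)) := by
  have hne : p.2 ≠ q.2 := fun h => hpq (Prod.ext hb h)
  have hs : 1 < s := by
    simpa using Fintype.one_lt_card_iff_nontrivial.2 ⟨⟨p.2, q.2, hne⟩⟩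
  rw [pairInclusionProb_eq_prod, Fintype.prod_eq_single p.1 fun l hl => by
    rw [card_filter_powersetCard_univ_div hτs _ ∅ (by simp [Ne.symm hl, hb ▸ Ne.symm hl])]
    simp]
  rw [card_filter_powersetCard_univ_div hτs _ {p.2, q.2} (by simp [hb, insert_subset_iff]),
    card_pair hne, Nat.cast_descFactorial_two, Nat.cast_descFactorial_two,
    max_eq_right (by omega), Nat.cast_sub hs.le, Nat.cast_one]
  exact mul_div_mul_comm _ _ _ _

theorem pairInclusionProb_of_fst_ne {p q : Fin c × Fin s} (hb : p.1 ≠ q.1) :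
    pairInclusionProb c s τ p q = (τ / s) ^ 2 := by
  rw [pairInclusionProb_eq_prod, Fintype.prod_eq_mul p.1 q.1 hb fun l hl => by
    rw [card_filter_powersetCard_univ_div hτs _ ∅ (by simp [Ne.symm hl.1, Ne.symm hl.2])]
    simp]
  rw [card_filter_powersetCard_univ_div hτs _ {p.2} (by simp [Ne.symm hb]),
    card_filter_powersetCard_univ_div hτs _ {q.2} (by simp [hb])]
  simp [sq]

end PairInclusion

theorem sum_sum_mul_eq_of_blockwise {ι κ : Type*} [Fintype ι] [DecidableEq ι] [DecidableEq κ]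
    (f : ι → κ) (a w : ι → ι → ℝ) (r ρ : ℝ) (h_self : ∀ p, w p p = r)
    (h_block : ∀ p q, p ≠ q → f p = f q → w p q = r * ρ)
    (h_cross : ∀ p q, f p ≠ f q → w p q = r ^ 2) :
    ∑ p, ∑ q, w p q * a p q
      = r * ((1 - ρ) * ∑ p, a p p + ρ * ∑ p, ∑ q, a p q
          + (r - ρ) * (∑ p, ∑ q, a p q - ∑ p, ∑ q, if f p = f q then a p q else 0)) := by
  have hdiag : ∑ p, a p p = ∑ p, ∑ q, if p = q then a p q else 0 := by simp
  simp only [hdiag, mul_sum, ← sum_sub_distrib, ← sum_add_distrib]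
  refine sum_congr rfl fun p _ => sum_congr rfl fun q _ => ?_
  by_cases hpq : p = q
  · subst hpq
    simp only [h_self, if_true]
    ring
  · by_cases hb : f p = f q
    · simp only [h_block p q hpq hb, hpq, hb, if_true, if_false]
      ring
    · simp only [h_cross p q hb, hpq, hb, if_false]
      ring

theorem stmt_2_general (c s τ : ℕ) (hτs : τ ≤ s)
    (G : Matrix (Fin c × Fin s) (Fin c × Fin s) ℝ) (x : Fin c × Fin s → ℝ) :
    (∑ S ∈ samplings c s τ, ∑ p : Fin c × Fin s, ∑ q : Fin c × Fin s,
        restr S x p * G p q * restr S x q) / ((s.choose τ : ℝ) ^ c) =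
      ((τ : ℝ) / (s : ℝ)) *
        ((1 - ((τ : ℝ) - 1) / ((max 1 (s - 1) : ℕ) : ℝ)) *
            (∑ p : Fin c × Fin s, G p p * (x p) ^ 2)
          + (((τ : ℝ) - 1) / ((max 1 (s - 1) : ℕ) : ℝ)) *
            (∑ p : Fin c × Fin s, ∑ q : Fin c × Fin s, x p * G p q * x q)
          + ((τ : ℝ) / (s : ℝ) - ((τ : ℝ) - 1) / ((max 1 (s - 1) : ℕ) : ℝ)) *
            ((∑ p : Fin c × Fin s, ∑ q : Fin c × Fin s, x p * G p q * x q)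
              - ∑ p : Fin c × Fin s, ∑ q : Fin c × Fin s,
                  if p.1 = q.1 then x p * G p q * x q else 0)) := by
  have hdiag : ∑ p, G p p * x p ^ 2 = ∑ p, x p * G p p * x p :=
    sum_congr rfl fun p _ => by ring
  rw [sum_samplings_div_eq_sum_pairInclusionProb, hdiag]
  exact sum_sum_mul_eq_of_blockwise Prod.fst _ _ _ _ (pairInclusionProb_self hτs)
    (fun _ _ => pairInclusionProb_of_ne_of_fst_eq hτs)
    (fun _ _ => pairInclusionProb_of_fst_ne hτs)

/-- Lemma 2 of the paper, from [richtarik2013distributed].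
With `s₁ = max(1, s−1)`, `α₁ = 1 − (τ−1)/s₁`, `α₂ = (τ−1)/s₁`,
`α₃ = τ/s − (τ−1)/s₁`, for any `d×d` matrix `G` (`d = c·s`) and `x ∈ ℝ^d`, the
uniform average over all distributed samplings of `(x^Ŝ)ᵀ G x^Ŝ` equals
`(τ/s)·[α₁ xᵀD^G x + α₂ xᵀG x + α₃ xᵀ(G − B^G)x]`. -/
theorem stmt_2 (c s τ : ℕ) (hc : 0 < c) (hs : 0 < s) (hτ : 0 < τ) (hτs : τ ≤ s)
    (G : Matrix (Fin c × Fin s) (Fin c × Fin s) ℝ) (x : Fin c × Fin s → ℝ) :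
    (∑ S ∈ samplings c s τ, ∑ p : Fin c × Fin s, ∑ q : Fin c × Fin s,
        restr S x p * G p q * restr S x q) / ((s.choose τ : ℝ) ^ c) =
      ((τ : ℝ) / (s : ℝ)) *
        ((1 - ((τ : ℝ) - 1) / ((max 1 (s - 1) : ℕ) : ℝ)) *
            (∑ p : Fin c × Fin s, G p p * (x p) ^ 2)
          + (((τ : ℝ) - 1) / ((max 1 (s - 1) : ℕ) : ℝ)) *
            (∑ p : Fin c × Fin s, ∑ q : Fin c × Fin s, x p * G p q * x q)
          + ((τ : ℝ) / (s : ℝ) - ((τ : ℝ) - 1) / ((max 1 (s - 1) : ℕ) : ℝ)) *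
            ((∑ p : Fin c × Fin s, ∑ q : Fin c × Fin s, x p * G p q * x q)
              - ∑ p : Fin c × Fin s, ∑ q : Fin c × Fin s,
                  if p.1 = q.1 then x p * G p q * x q else 0)) :=
  stmt_2_general c s τ hτs G x
end

section
/- Let c, s, τ be positive integers with 1 ≤ τ ≤ s, set d = c·s and s₁ = max(1, s−1). Let a ∈ ℝ^d be a nonzero vector, let ω = #{(l,i) : a_{(l,i)} ≠ 0} and ω' = #{l : a_{(l,i)} ≠ 0 for some i}, and define α* = 1 + (τ−1)(ω−1)/s₁ + (τ/s − (τ−1)/s₁)·((ω'−1)/ω')·ω. Then for every h ∈ ℝ^d, the average over all distributed samplings of (∑_{j ∈ Ŝ} a_j h_j)² is at most (τ/s)·α*·∑_{j=1}^d a_j² h_j². -/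
/-!
Write `x = a ⊙ h`, `r = τ/s`, `β = (τ-1)/(s-1)` and `X_l = ∑_i x_(l,i)`. Expanding the square,
the average is `∑_{p,q} x_p x_q P(p, q ∈ Ŝ)`, and since the blocks are sampled independently,
`P(p, q ∈ Ŝ)` is `r` for `p = q`, `r β` for distinct coordinates of one block and `r²` for
coordinates of different blocks. Hence the average equals
`r² (∑ x)² + r (β - r) ∑_l X_l² + r (1 - β) ∑ x²`, and Cauchy–Schwarz on the supports,
`(∑ x)² ≤ ω ∑ x²` and `(∑ x)² ≤ ω' ∑_l X_l²`, bounds it using `0 ≤ β ≤ r`.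
-/

open Finset

theorem card_filter_powersetCard_superset_mul_choose {α : Type*} [DecidableEq α]
    (R U : Finset α) (k : ℕ) (hRU : R ⊆ U) :
    #{T ∈ U.powersetCard k | R ⊆ T} * (#U).choose #R = (#U).choose k * k.choose #R := by
  by_cases hRk : #R ≤ k
  · rw [card_filter_powersetCard_subset R U k hRU hRk, Nat.choose_mul hRk, mul_comm]
  · rw [Nat.choose_eq_zero_of_lt (not_le.1 hRk), mul_zero, mul_eq_zero, card_eq_zero,
      filter_eq_empty_iff]
    left
    intro T hT hRT
    have := card_le_card hRT
    rw [(mem_powersetCard.1 hT).2] at this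
    exact hRk this

section UniformSubset

variable {α : Type*} [Fintype α] [DecidableEq α] {k : ℕ}

theorem card_filter_mem_powersetCard_univ_div (hk : k ≤ Fintype.card α) (i : α) :
    (#{T ∈ (univ : Finset α).powersetCard k | i ∈ T} : ℝ) / (Fintype.card α).choose k
      = k / Fintype.card α := by
  have hcount := card_filter_powersetCard_superset_mul_choose {i} univ k (subset_univ _)
  simp only [singleton_subset_iff, card_singleton, Nat.choose_one_right, card_univ] at hcount
  have hchoose : ((Fintype.card α).choose k : ℝ) ≠ 0 := by exact_mod_cast (Nat.choose_pos hk).ne'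
  have hcard : (Fintype.card α : ℝ) ≠ 0 := by exact_mod_cast (Fintype.card_pos_iff.2 ⟨i⟩).ne'
  rw [div_eq_div_iff hchoose hcard, mul_comm (k : ℝ)]
  exact_mod_cast hcount

theorem card_filter_mem_and_mem_powersetCard_univ_div (hk : k ≤ Fintype.card α) {i j : α}
    (hij : i ≠ j) :
    (#{T ∈ (univ : Finset α).powersetCard k | i ∈ T ∧ j ∈ T} : ℝ) / (Fintype.card α).choose k
      = k / Fintype.card α * ((k - 1) / (Fintype.card α - 1)) := by
  have hcount := card_filter_powersetCard_superset_mul_choose {i, j} univ k (subset_univ _)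
  simp only [insert_subset_iff, singleton_subset_iff, card_pair hij, card_univ] at hcount
  have hchoose : ((Fintype.card α).choose k : ℝ) ≠ 0 := by exact_mod_cast (Nat.choose_pos hk).ne'
  have hcard : (1 : ℝ) < Fintype.card α := by exact_mod_cast Fintype.one_lt_card_iff.2 ⟨i, j, hij⟩
  have hcard₀ : (Fintype.card α : ℝ) ≠ 0 := by positivity
  have hcard₁ : (Fintype.card α : ℝ) - 1 ≠ 0 := by linarith
  have hcount' := congrArg (Nat.cast : ℕ → ℝ) hcount
  push_cast [Nat.cast_choose_two] at hcount'
  rw [div_eq_iff hchoose]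
  field_simp
  linear_combination (2 : ℝ) * hcount'

end UniformSubset

theorem sum_sq_sum_eq_sum_sum_mul_card_filter {Ω ι R : Type*} [Fintype ι] [DecidableEq ι]
    [CommSemiring R] (𝒮 : Finset Ω) (F : Ω → Finset ι) (x : ι → R) :
    ∑ S ∈ 𝒮, (∑ p ∈ F S, x p) ^ 2 = ∑ p, ∑ q, x p * x q * #{S ∈ 𝒮 | p ∈ F S ∧ q ∈ F S} := by
  have hsq : ∀ S ∈ 𝒮, (∑ p ∈ F S, x p) ^ 2
      = ∑ p, ∑ q, if p ∈ F S ∧ q ∈ F S then x p * x q else 0 := fun S _ => by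
    simp_rw [← ite_zero_mul_ite_zero, ← sum_mul_sum, sum_ite_mem, univ_inter, sq]
  simp_rw [sum_congr rfl hsq, natCast_card_filter, mul_sum, mul_ite, mul_one, mul_zero]
  rw [sum_comm]
  exact sum_congr rfl fun p _ => sum_comm

lemma sum_sum_ite_eq_mul {ι R : Type*} [Fintype ι] [DecidableEq ι] [CommSemiring R]
    (x : ι → R) : ∑ p, ∑ q, (if p = q then x p * x q else 0) = ∑ p, x p ^ 2 := by
  simp [sq]

section BlockQuadraticForm

variable {ι κ R : Type*} [Fintype ι] [Fintype κ] [DecidableEq ι]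

lemma sum_sum_ite_fst_eq_mul [CommSemiring R] (x : ι × κ → R) :
    ∑ p, ∑ q, (if p.1 = q.1 then x p * x q else 0) = ∑ l, (∑ i, x (l, i)) ^ 2 := by
  have hrow : ∀ p : ι × κ, ∑ q, (if p.1 = q.1 then x p * x q else 0) = x p * ∑ j, x (p.1, j) :=
    fun p => by
      rw [Fintype.sum_prod_type, Fintype.sum_eq_single p.1 fun l hl => by simp [Ne.symm hl]]
      simp [mul_sum]
  simp [hrow, Fintype.sum_prod_type, sq, sum_mul]

theorem sum_sum_mul_ite_eq_ite_fst_eq [DecidableEq κ] [CommRing R] (x : ι × κ → R)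
    (A B C : R) :
    ∑ p, ∑ q, x p * x q * (if p = q then A else if p.1 = q.1 then B else C)
      = C * (∑ p, x p) ^ 2 + (B - C) * ∑ l, (∑ i, x (l, i)) ^ 2 + (A - B) * ∑ p, x p ^ 2 := by
  have hsplit : ∀ p q, x p * x q * (if p = q then A else if p.1 = q.1 then B else C)
      = C * (x p * x q) + (B - C) * (if p.1 = q.1 then x p * x q else 0)
        + (A - B) * (if p = q then x p * x q else 0) := fun p q => by
    split_ifs <;> simp_all <;> ring
  simp only [hsplit, sum_add_distrib, ← mul_sum, sum_sum_ite_eq_mul, sum_sum_ite_fst_eq_mul, sq,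
    sum_mul_sum]

end BlockQuadraticForm

def sampledCoords {c s : ℕ} (S : Fin c → Finset (Fin s)) : Finset (Fin c × Fin s) :=
  {p | p.2 ∈ S p.1}

@[simp]
lemma mem_sampledCoords {c s : ℕ} {S : Fin c → Finset (Fin s)} {p : Fin c × Fin s} :
    p ∈ sampledCoords S ↔ p.2 ∈ S p.1 := by
  simp [sampledCoords]

lemma sum_sum_eq_sum_sampledCoords {R : Type*} [AddCommMonoid R] {c s : ℕ}
    (S : Fin c → Finset (Fin s)) (x : Fin c × Fin s → R) :
    ∑ l, ∑ i ∈ S l, x (l, i) = ∑ p ∈ sampledCoords S, x p := by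
  rw [sampledCoords, sum_filter, Fintype.sum_prod_type]
  simp_rw [sum_ite_mem, univ_inter]

noncomputable def inclusionProb (s τ : ℕ) : ℝ := τ / s

/-- `P(j ∈ S_l ∣ i ∈ S_l)` for `i ≠ j`; the denominator `max 1 (s - 1)` differs from `s - 1`
only when `s ≤ 1`, where no such pair exists. -/
noncomputable def coinclusionProb (s τ : ℕ) : ℝ := (τ - 1) / (max 1 (s - 1) : ℕ)

lemma coinclusionProb_nonneg {s τ : ℕ} (hτ : 1 ≤ τ) : 0 ≤ coinclusionProb s τ :=
  div_nonneg (by simpa using hτ) (Nat.cast_nonneg _)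

lemma coinclusionProb_le_inclusionProb {s τ : ℕ} (hτs : τ ≤ s) :
    coinclusionProb s τ ≤ inclusionProb s τ := by
  unfold coinclusionProb inclusionProb
  rcases Nat.lt_or_ge s 2 with hs | hs
  · interval_cases s <;> interval_cases τ <;> norm_num
  · have hsR : (2 : ℝ) ≤ s := by exact_mod_cast hs
    have hτsR : (τ : ℝ) ≤ s := by exact_mod_cast hτs
    rw [max_eq_right (by omega), Nat.cast_sub (by omega), Nat.cast_one,
      div_le_div_iff₀ (by linarith) (by linarith)]
    nlinarith

theorem card_filter_mem_sampledCoords_div {c s τ : ℕ} (hτs : τ ≤ s) (p q : Fin c × Fin s) :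
    (#{S ∈ samplings c s τ | p ∈ sampledCoords S ∧ q ∈ sampledCoords S} : ℝ) / s.choose τ ^ c
      = if p = q then inclusionProb s τ
        else if p.1 = q.1 then inclusionProb s τ * coinclusionProb s τ
        else inclusionProb s τ ^ 2 := by
  have hevent : {S ∈ samplings c s τ | p ∈ sampledCoords S ∧ q ∈ sampledCoords S}
      = Fintype.piFinset fun l => {T ∈ (univ : Finset (Fin s)).powersetCard τ |
          (p.1 = l → p.2 ∈ T) ∧ (q.1 = l → q.2 ∈ T)} := by
    ext S
    simp [samplings, Fintype.mem_piFinset, forall_and]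
  have hchoose : (s.choose τ : ℝ) ≠ 0 := by exact_mod_cast (Nat.choose_pos hτs).ne'
  rw [hevent, Fintype.card_piFinset, Nat.cast_prod, ← Fin.prod_const c (s.choose τ : ℝ),
    ← prod_div_distrib]
  have hfree : ∀ l, l ≠ p.1 → l ≠ q.1 →
      (#{T ∈ (univ : Finset (Fin s)).powersetCard τ |
          (p.1 = l → p.2 ∈ T) ∧ (q.1 = l → q.2 ∈ T)} : ℝ) / s.choose τ = 1 := fun l hp hq => by
    simp [Ne.symm hp, Ne.symm hq, hchoose]
  have hmem := card_filter_mem_powersetCard_univ_div (α := Fin s) (by simpa using hτs)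
  simp only [Fintype.card_fin] at hmem
  unfold inclusionProb coinclusionProb
  split_ifs with hpq hblock
  · subst hpq
    rw [Fintype.prod_eq_single p.1 fun l hl => hfree l hl hl]
    simpa using hmem p.2
  · rw [Fintype.prod_eq_single p.1 fun l hl => hfree l hl (hblock ▸ hl)]
    have hij : p.2 ≠ q.2 := fun h => hpq (Prod.ext hblock h)
    have hs : 2 ≤ s := by
      have := Fintype.one_lt_card_iff.2 ⟨p.2, q.2, hij⟩
      simp only [Fintype.card_fin] at this
      omega
    have hpair := card_filter_mem_and_mem_powersetCard_univ_div (α := Fin s)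
      (by simpa using hτs) hij
    simp only [Fintype.card_fin] at hpair
    rw [max_eq_right (by omega), Nat.cast_sub (by omega)]
    simpa [hblock] using hpair
  · rw [Fintype.prod_eq_mul p.1 q.1 hblock fun l hl => hfree l hl.1 hl.2]
    simp [hblock, Ne.symm hblock, hmem, sq]

theorem sum_samplings_sq_div_eq {c s τ : ℕ} (hτs : τ ≤ s) (x : Fin c × Fin s → ℝ) :
    (∑ S ∈ samplings c s τ, (∑ l, ∑ i ∈ S l, x (l, i)) ^ 2) / s.choose τ ^ c
      = inclusionProb s τ ^ 2 * (∑ p, x p) ^ 2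
        + (inclusionProb s τ * coinclusionProb s τ - inclusionProb s τ ^ 2)
          * ∑ l, (∑ i, x (l, i)) ^ 2
        + (inclusionProb s τ - inclusionProb s τ * coinclusionProb s τ) * ∑ p, x p ^ 2 := by
  simp_rw [sum_sum_eq_sum_sampledCoords _ x, sum_sq_sum_eq_sum_sum_mul_card_filter, sum_div,
    mul_div_assoc, card_filter_mem_sampledCoords_div hτs]
  exact sum_sum_mul_ite_eq_ite_fst_eq x _ _ _

lemma sq_sum_le_card_mul_sum_sq_of_support_subset_s4 {ι : Type*} [Fintype ι] (f : ι → ℝ)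
    (t : Finset ι) (hf : ∀ i ∉ t, f i = 0) : (∑ i, f i) ^ 2 ≤ #t * ∑ i, f i ^ 2 := by
  rw [← sum_subset (subset_univ t) fun i _ hi => hf i hi]
  calc (∑ i ∈ t, f i) ^ 2 ≤ (#t : ℝ) * ∑ i ∈ t, f i ^ 2 := sq_sum_le_card_mul_sum_sq
    _ ≤ (#t : ℝ) * ∑ i, f i ^ 2 := mul_le_mul_of_nonneg_left
      (sum_le_sum_of_subset_of_nonneg (subset_univ t) fun i _ _ => sq_nonneg (f i)) (by positivity)

lemma moment_le_of_sq_sum_le {r β ω ω' u v w : ℝ} (hβ : 0 ≤ β) (hβr : β ≤ r) (hω' : 1 ≤ ω')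
    (hwu : w ≤ ω * u) (hwv : w ≤ ω' * v) :
    r ^ 2 * w + (r * β - r ^ 2) * v + (r - r * β) * u
      ≤ r * (1 + β * (ω - 1) + (r - β) * ((ω' - 1) / ω') * ω) * u := by
  have hv : w - v ≤ (ω' - 1) / ω' * (ω * u) := by
    rw [div_mul_eq_mul_div, le_div_iff₀ (by linarith)]
    nlinarith
  have hr : 0 ≤ r := hβ.trans hβr
  nlinarith [mul_le_mul_of_nonneg_left hv (mul_nonneg hr (sub_nonneg.2 hβr)),
    mul_le_mul_of_nonneg_left hwu (mul_nonneg hr hβ)]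

theorem stmt_4_general (c s τ : ℕ) (hτ : 1 ≤ τ) (hτs : τ ≤ s)
    (a : Fin c × Fin s → ℝ) (ha : a ≠ 0)
    (ω ω' : ℕ)
    (hω : ω = (Finset.univ.filter fun p : Fin c × Fin s => a p ≠ 0).card)
    (hω' : ω' = (Finset.univ.filter fun l : Fin c => ∃ i : Fin s, a (l, i) ≠ 0).card)
    (h : Fin c × Fin s → ℝ) :
    (∑ S ∈ samplings c s τ,
        (∑ l : Fin c, ∑ i ∈ S l, a (l, i) * h (l, i)) ^ 2) / ((s.choose τ : ℝ) ^ c) ≤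
      ((τ : ℝ) / (s : ℝ)) *
        (1 + ((τ : ℝ) - 1) * ((ω : ℝ) - 1) / ((max 1 (s - 1) : ℕ) : ℝ)
          + ((τ : ℝ) / (s : ℝ) - ((τ : ℝ) - 1) / ((max 1 (s - 1) : ℕ) : ℝ)) *
              (((ω' : ℝ) - 1) / (ω' : ℝ)) * (ω : ℝ)) *
        ∑ p : Fin c × Fin s, (a p) ^ 2 * (h p) ^ 2 := by
  subst hω hω'
  set x : Fin c × Fin s → ℝ := fun p => a p * h p
  obtain ⟨p₀, hp₀⟩ := Function.ne_iff.1 ha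
  have hω'_pos : (1 : ℝ) ≤ #{l | ∃ i, a (l, i) ≠ 0} := by
    exact_mod_cast card_pos.2 ⟨p₀.1, by simpa using ⟨p₀.2, hp₀⟩⟩
  have hcoord : (∑ p, x p) ^ 2 ≤ #{p | a p ≠ 0} * ∑ p, x p ^ 2 :=
    sq_sum_le_card_mul_sum_sq_of_support_subset_s4 x _ fun p hp => by simp_all [x]
  have hblock : (∑ p, x p) ^ 2 ≤ #{l | ∃ i, a (l, i) ≠ 0} * ∑ l, (∑ i, x (l, i)) ^ 2 := by
    rw [Fintype.sum_prod_type]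
    exact sq_sum_le_card_mul_sum_sq_of_support_subset_s4 _ _ fun l hl => by simp_all [x]
  calc _ = _ := sum_samplings_sq_div_eq hτs x
    _ ≤ _ := moment_le_of_sq_sum_le (coinclusionProb_nonneg hτ)
          (coinclusionProb_le_inclusionProb hτs) hω'_pos hcoord hblock
    _ = _ := by
      simp only [inclusionProb, coinclusionProb, x, mul_pow]
      ring

/-- inequality (10) of the paper, for a single row `a`.
Coordinates are indexed by `(l,i) ∈ Fin c × Fin s`, `d = c·s`, `s₁ = max(1,s−1)`.
For nonzero `a`, with `ω` its number of nonzeros, `ω'` its number of active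
blocks, and `α* = 1 + (τ−1)(ω−1)/s₁ + (τ/s − (τ−1)/s₁)·((ω'−1)/ω')·ω`, for every
`h`, the average over all distributed samplings of `(∑_{j∈Ŝ} a_j h_j)²` is at
most `(τ/s)·α*·∑_j a_j² h_j²`. -/
theorem stmt_4 (c s τ : ℕ) (hc : 0 < c) (hs : 0 < s) (hτ : 1 ≤ τ) (hτs : τ ≤ s)
    (a : Fin c × Fin s → ℝ) (ha : a ≠ 0)
    (ω ω' : ℕ)
    (hω : ω = (Finset.univ.filter fun p : Fin c × Fin s => a p ≠ 0).card)
    (hω' : ω' = (Finset.univ.filter fun l : Fin c => ∃ i : Fin s, a (l, i) ≠ 0).card)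
    (h : Fin c × Fin s → ℝ) :
    (∑ S ∈ samplings c s τ,
        (∑ l : Fin c, ∑ i ∈ S l, a (l, i) * h (l, i)) ^ 2) / ((s.choose τ : ℝ) ^ c) ≤
      ((τ : ℝ) / (s : ℝ)) *
        (1 + ((τ : ℝ) - 1) * ((ω : ℝ) - 1) / ((max 1 (s - 1) : ℕ) : ℝ)
          + ((τ : ℝ) / (s : ℝ) - ((τ : ℝ) - 1) / ((max 1 (s - 1) : ℕ) : ℝ)) *
              (((ω' : ℝ) - 1) / (ω' : ℝ)) * (ω : ℝ)) *
        ∑ p : Fin c × Fin s, (a p) ^ 2 * (h p) ^ 2 :=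
  stmt_4_general c s τ hτ hτs a ha ω ω' hω hω' h
end

section
/- Let c, s, τ be positive integers with 1 ≤ τ ≤ s, set d = c·s and s₁ = max(1, s−1). Let A be an n×d real matrix with no zero rows. For each row j let ω_j = #{(l,i) : A_{j,(l,i)} ≠ 0}, ω'_j = #{l : A_{j,(l,i)} ≠ 0 for some i}, and α*_j = 1 + (τ−1)(ω_j−1)/s₁ + (τ/s − (τ−1)/s₁)·((ω'_j−1)/ω'_j)·ω_j. Define D¹_ii = ∑_{j=1}^n α*_j A_{ji}². Then for every h ∈ ℝ^d, the average over all distributed samplings of (h^Ŝ)ᵀAᵀA h^Ŝ is at most (τ/s)·∑_{i=1}^d D¹_ii h_i². -/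
open Finset

/-!
Fix a row `a = (A_{j,p} h_p)_p`. The sampled row sum `∑_l ∑_{i ∈ S_l} a_{l,i}` is a sum of
independent block terms, so its second moment is the square of its mean plus the sum of the
block variances. A uniformly random `τ`-subset of `s` coordinates contains a given coordinate
with probability `γ = τ/s` and a given pair with probability `τ(τ-1)/(s(s-1)) = γβ`, where
`β = (τ-1)/s₁`. Hence the second moment is `γ²T² + (γβ - γ²)B + (γ - γβ)Q`, with `T` the row
sum, `B` the sum of the squared block sums and `Q` the sum of squares. The Cauchy–Schwarz
bounds `T² ≤ ω Q` and `T² ≤ ω' B` then bound it by `γ α*_j Q`.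
-/

open scoped BigOperators

lemma card_filter_powersetCard_subset_mul_descFactorial_s5 {α : Type*} [DecidableEq α]
    (u v : Finset α) (k : ℕ) (hvu : v ⊆ u) :
    #{T ∈ u.powersetCard k | v ⊆ T} * (#u).descFactorial #v
      = (#u).choose k * k.descFactorial #v := by
  rcases le_or_gt #v k with hvk | hkv
  · rw [card_filter_powersetCard_subset v u k hvu hvk, Nat.descFactorial_eq_factorial_mul_choose,
      Nat.descFactorial_eq_factorial_mul_choose, mul_left_comm ((#u).choose k), Nat.choose_mul hvk]
    ring
  · rw [(Nat.descFactorial_eq_zero_iff_lt).2 hkv, mul_zero, mul_eq_zero, card_eq_zero]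
    left
    refine filter_false_of_mem fun T hT hvT => ?_
    have := card_le_card hvT
    rw [(mem_powersetCard.1 hT).2] at this
    omega

lemma expect_powersetCard_boole_subset {α : Type*} [DecidableEq α]
    (u v : Finset α) (k : ℕ) (hvu : v ⊆ u) (hku : k ≤ #u) :
    𝔼 T ∈ u.powersetCard k, (if v ⊆ T then (1 : ℝ) else 0)
      = k.descFactorial #v / (#u).descFactorial #v := by
  have hchoose : ((#u).choose k : ℝ) ≠ 0 := by exact_mod_cast (Nat.choose_pos hku).ne'
  have hdesc : ((#u).descFactorial #v : ℝ) ≠ 0 := by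
    exact_mod_cast (Nat.descFactorial_pos.2 (card_le_card hvu)).ne'
  have key := congrArg (Nat.cast (R := ℝ))
    (card_filter_powersetCard_subset_mul_descFactorial_s5 u v k hvu)
  push_cast at key
  rw [expect_eq_sum_div_card, sum_boole, card_powersetCard, div_eq_div_iff hchoose hdesc]
  linear_combination key

section Block

variable {ι : Type*} [Fintype ι] [DecidableEq ι] {k : ℕ}

lemma sum_mem_eq_sum_mul_boole (T : Finset ι) (a : ι → ℝ) :
    ∑ i ∈ T, a i = ∑ i, a i * if i ∈ T then 1 else 0 := by
  simp

lemma expect_powersetCard_boole_mem (hk : k ≤ Fintype.card ι) (i : ι) :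
    𝔼 T ∈ powersetCard k univ, (if i ∈ T then (1 : ℝ) else 0) = k / Fintype.card ι := by
  simpa using expect_powersetCard_boole_subset univ {i} k (subset_univ _) (by simpa)

lemma expect_powersetCard_sum_mem (hk : k ≤ Fintype.card ι) (a : ι → ℝ) :
    𝔼 T ∈ powersetCard k univ, ∑ i ∈ T, a i = k / Fintype.card ι * ∑ i, a i := by
  rw [expect_congr rfl fun T _ => sum_mem_eq_sum_mul_boole T a]
  simp_rw [expect_sum_comm, ← mul_expect, expect_powersetCard_boole_mem hk, mul_sum, mul_comm]

lemma expect_powersetCard_sq_sum_mem (hk : k ≤ Fintype.card ι) (a : ι → ℝ) :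
    𝔼 T ∈ powersetCard k univ, (∑ i ∈ T, a i) ^ 2
      = k * (k - 1) / (Fintype.card ι * (Fintype.card ι - 1)) * (∑ i, a i) ^ 2
        + (k / Fintype.card ι - k * (k - 1) / (Fintype.card ι * (Fintype.card ι - 1)))
          * ∑ i, a i ^ 2 := by
  set ρ : ℝ := k * (k - 1) / (Fintype.card ι * (Fintype.card ι - 1))
  have hpair (i j : ι) : 𝔼 T ∈ powersetCard k univ, (if i ∈ T then (1 : ℝ) else 0) *
      (if j ∈ T then 1 else 0) = ρ + (k / Fintype.card ι - ρ) * if i = j then 1 else 0 := by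
    rcases eq_or_ne i j with rfl | hij
    · simp only [ite_zero_mul_ite_zero, mul_one, and_self, expect_powersetCard_boole_mem hk,
        if_true]
      ring
    · have h := expect_powersetCard_boole_subset univ {i, j} k (subset_univ _) (by simpa)
      simp only [insert_subset_iff, singleton_subset_iff, card_pair hij, card_univ,
        Nat.cast_descFactorial_two] at h
      simp only [ite_zero_mul_ite_zero, mul_one, h, hij, if_false]
      ring
  calc 𝔼 T ∈ powersetCard k univ, (∑ i ∈ T, a i) ^ 2
      = ∑ i, ∑ j, a i * a j * 𝔼 T ∈ powersetCard k univ,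
          (if i ∈ T then (1 : ℝ) else 0) * (if j ∈ T then 1 else 0) := by
        rw [expect_congr rfl fun T _ => by rw [sum_mem_eq_sum_mul_boole T a]]
        simp_rw [sq, sum_mul_sum, expect_sum_comm, mul_expect]
        congr! 3 with i _ j _ T
        ring
    _ = ρ * (∑ i, a i) ^ 2 + (k / Fintype.card ι - ρ) * ∑ i, a i ^ 2 := by
        simp_rw [hpair, mul_add, sum_add_distrib, mul_boole, mul_ite, mul_zero, sum_ite_eq,
          mem_univ, if_true, sq, sum_mul_sum, mul_sum]
        congr 1 <;> refine sum_congr rfl fun i _ => ?_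
        · exact sum_congr rfl fun j _ => by ring
        · ring

end Block

section Independence

variable {ι κ : Type*} [Fintype ι] [DecidableEq ι]

lemma expect_piFinset_prod (t : Finset κ) (G : ι → κ → ℝ) :
    𝔼 S ∈ Fintype.piFinset (fun _ : ι => t), ∏ i, G i (S i) = ∏ i, 𝔼 T ∈ t, G i T := by
  simp only [expect_eq_sum_div_card, sum_prod_piFinset, Fintype.card_piFinset, Nat.cast_prod,
    prod_div_distrib]

variable {t : Finset κ}

lemma expect_piFinset_apply (ht : t.Nonempty) (f : κ → ℝ) (l : ι) :
    𝔼 S ∈ Fintype.piFinset (fun _ : ι => t), f (S l) = 𝔼 T ∈ t, f T := by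
  have h := expect_piFinset_prod t fun i T => if i = l then f T else 1
  simp only [Fintype.prod_ite_eq'] at h
  rw [h, Fintype.prod_eq_single l fun i hi => by simp [hi, expect_const ht]]
  simp

lemma expect_piFinset_apply_mul_apply (ht : t.Nonempty) (f g : κ → ℝ) {l m : ι} (hlm : l ≠ m) :
    𝔼 S ∈ Fintype.piFinset (fun _ : ι => t), f (S l) * g (S m)
      = (𝔼 T ∈ t, f T) * 𝔼 T ∈ t, g T := by
  have h := expect_piFinset_prod t fun i T =>
    (if i = l then f T else 1) * (if i = m then g T else 1)
  simp only [prod_mul_distrib, Fintype.prod_ite_eq'] at h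
  rw [h, prod_eq_mul l m hlm (fun i _ hi => by simp [hi, expect_const ht]) (by simp) (by simp)]
  simp [hlm, hlm.symm]

lemma expect_piFinset_sq_sum (ht : t.Nonempty) (Y : ι → κ → ℝ) :
    𝔼 S ∈ Fintype.piFinset (fun _ : ι => t), (∑ l, Y l (S l)) ^ 2
      = (∑ l, 𝔼 T ∈ t, Y l T) ^ 2 + ∑ l, (𝔼 T ∈ t, Y l T ^ 2 - (𝔼 T ∈ t, Y l T) ^ 2) := by
  have hcov (l m : ι) : 𝔼 S ∈ Fintype.piFinset (fun _ : ι => t), Y l (S l) * Y m (S m)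
      = (𝔼 T ∈ t, Y l T) * (𝔼 T ∈ t, Y m T)
        + if l = m then 𝔼 T ∈ t, Y l T ^ 2 - (𝔼 T ∈ t, Y l T) ^ 2 else 0 := by
    rcases eq_or_ne l m with rfl | hlm
    · simp only [if_true, ← sq, expect_piFinset_apply ht (fun T => Y l T ^ 2)]
      ring
    · rw [expect_piFinset_apply_mul_apply ht _ _ hlm, if_neg hlm, add_zero]
  simp_rw [sq (∑ l, _), sum_mul_sum, expect_sum_comm, hcov, sum_add_distrib, sum_ite_eq,
    mem_univ, if_true]

end Independence

lemma expect_sq_sum_sum_mem_piFinset {β ι : Type*} [Fintype β] [DecidableEq β] [Fintype ι]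
    [DecidableEq ι] {k : ℕ} (hk : k ≤ Fintype.card ι) (a : β → ι → ℝ) :
    𝔼 S ∈ Fintype.piFinset (fun _ : β => powersetCard k (univ : Finset ι)),
        (∑ l, ∑ i ∈ S l, a l i) ^ 2
      = (k / Fintype.card ι) ^ 2 * (∑ l, ∑ i, a l i) ^ 2
        + (k * (k - 1) / (Fintype.card ι * (Fintype.card ι - 1)) - (k / Fintype.card ι) ^ 2)
          * ∑ l, (∑ i, a l i) ^ 2
        + (k / Fintype.card ι - k * (k - 1) / (Fintype.card ι * (Fintype.card ι - 1)))
          * ∑ l, ∑ i, a l i ^ 2 := by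
  have hne : (powersetCard k (univ : Finset ι)).Nonempty := powersetCard_nonempty.2 (by simpa)
  rw [expect_piFinset_sq_sum hne fun l T => ∑ i ∈ T, a l i]
  simp only [expect_powersetCard_sum_mem hk, expect_powersetCard_sq_sum_mem hk, mul_pow,
    ← mul_sum, sum_sub_distrib, sum_add_distrib]
  ring

lemma sq_sum_le_card_mul_sum_sq_of_eq_zero {ι : Type*} [Fintype ι] (u : Finset ι) {f : ι → ℝ}
    (hf : ∀ i ∉ u, f i = 0) : (∑ i, f i) ^ 2 ≤ #u * ∑ i, f i ^ 2 := by
  rw [← sum_subset (subset_univ u) (f := f) fun i _ hi => hf i hi]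
  calc (∑ i ∈ u, f i) ^ 2 ≤ #u * ∑ i ∈ u, f i ^ 2 := sq_sum_le_card_mul_sum_sq
    _ ≤ #u * ∑ i, f i ^ 2 := by
      gcongr
      exact subset_univ u

lemma row_second_moment_le {β γ w w' Q B T : ℝ} (hβ : 0 ≤ β) (hβγ : β ≤ γ) (hw' : 1 ≤ w')
    (hTQ : T ^ 2 ≤ w * Q) (hTB : T ^ 2 ≤ w' * B) :
    γ ^ 2 * T ^ 2 + (γ * β - γ ^ 2) * B + (γ - γ * β) * Q
      ≤ γ * (1 + β * (w - 1) + (γ - β) * ((w' - 1) / w') * w) * Q := by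
  have hgap : T ^ 2 - B ≤ (w' - 1) / w' * (w * Q) := by
    calc T ^ 2 - B ≤ (w' - 1) / w' * T ^ 2 := by
          rw [div_mul_eq_mul_div, le_div_iff₀ (by linarith)]
          nlinarith
      _ ≤ (w' - 1) / w' * (w * Q) := by gcongr
  calc γ ^ 2 * T ^ 2 + (γ * β - γ ^ 2) * B + (γ - γ * β) * Q
      = γ * β * T ^ 2 + γ * (γ - β) * (T ^ 2 - B) + (γ - γ * β) * Q := by ring
    _ ≤ γ * β * (w * Q) + γ * (γ - β) * ((w' - 1) / w' * (w * Q)) + (γ - γ * β) * Q := by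
        have hγ : 0 ≤ γ := hβ.trans hβγ
        gcongr
    _ = γ * (1 + β * (w - 1) + (γ - β) * ((w' - 1) / w') * w) * Q := by ring

lemma samplings_eq_piFinset (c s τ : ℕ) :
    samplings c s τ = Fintype.piFinset fun _ : Fin c => powersetCard τ (univ : Finset (Fin s)) := by
  ext S
  simp [samplings]

lemma card_samplings (c s τ : ℕ) : #(samplings c s τ) = s.choose τ ^ c := by
  simp [samplings_eq_piFinset]

lemma expect_sq_sum_mul_restr {c s τ : ℕ} (hτs : τ ≤ s) (x y : Fin c × Fin s → ℝ) :
    𝔼 S ∈ samplings c s τ, (∑ p, x p * restr S y p) ^ 2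
      = (τ / s) ^ 2 * (∑ l, ∑ i, x (l, i) * y (l, i)) ^ 2
        + (τ * (τ - 1) / (s * (s - 1)) - (τ / s) ^ 2) * ∑ l, (∑ i, x (l, i) * y (l, i)) ^ 2
        + (τ / s - τ * (τ - 1) / (s * (s - 1))) * ∑ l, ∑ i, (x (l, i) * y (l, i)) ^ 2 := by
  have hsum (S : Fin c → Finset (Fin s)) :
      ∑ p, x p * restr S y p = ∑ l, ∑ i ∈ S l, x (l, i) * y (l, i) := by
    simp [restr, Fintype.sum_prod_type]
  simp_rw [samplings_eq_piFinset, hsum]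
  rw [expect_sq_sum_sum_mem_piFinset (by simpa using hτs), Fintype.card_fin]

lemma cast_max_one_sub_one {s : ℕ} (hs : 2 ≤ s) : ((max 1 (s - 1) : ℕ) : ℝ) = s - 1 := by
  rw [max_eq_right (by omega), Nat.cast_sub (by omega), Nat.cast_one]

lemma div_mul_sub_one_div_max {τ s : ℕ} (hτ : 1 ≤ τ) (hτs : τ ≤ s) :
    (τ : ℝ) / s * ((τ - 1) / ((max 1 (s - 1) : ℕ) : ℝ)) = τ * (τ - 1) / (s * (s - 1)) := by
  rcases lt_or_ge s 2 with hs | hs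
  · obtain rfl : τ = 1 := by omega
    simp
  · rw [cast_max_one_sub_one hs, div_mul_div_comm]

lemma sub_one_div_max_le_div {τ s : ℕ} (hτs : τ ≤ s) :
    ((τ : ℝ) - 1) / ((max 1 (s - 1) : ℕ) : ℝ) ≤ τ / s := by
  rcases lt_or_ge s 2 with hs | hs
  · interval_cases s <;> interval_cases τ <;> norm_num
  · have hτs' : (τ : ℝ) ≤ s := by exact_mod_cast hτs
    have hs' : (2 : ℝ) ≤ s := by exact_mod_cast hs
    rw [cast_max_one_sub_one hs, div_le_div_iff₀ (by linarith) (by linarith)]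
    nlinarith

theorem stmt_5_general (c s τ : ℕ) (hτ : 1 ≤ τ) (hτs : τ ≤ s)
    (n : ℕ) (A : Matrix (Fin n) (Fin c × Fin s) ℝ)
    (hrows : ∀ j : Fin n, ∃ p : Fin c × Fin s, A j p ≠ 0)
    (ω ω' : Fin n → ℕ)
    (hω : ∀ j, ω j = (Finset.univ.filter fun p : Fin c × Fin s => A j p ≠ 0).card)
    (hω' : ∀ j, ω' j = (Finset.univ.filter fun l : Fin c => ∃ i : Fin s, A j (l, i) ≠ 0).card)
    (h : Fin c × Fin s → ℝ) :
    (∑ S ∈ samplings c s τ,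
        ∑ j : Fin n, (∑ p : Fin c × Fin s, A j p * restr S h p) ^ 2) /
        ((s.choose τ : ℝ) ^ c) ≤
      ((τ : ℝ) / (s : ℝ)) *
        ∑ p : Fin c × Fin s,
          (∑ j : Fin n,
            (1 + ((τ : ℝ) - 1) * ((ω j : ℝ) - 1) / ((max 1 (s - 1) : ℕ) : ℝ)
              + ((τ : ℝ) / (s : ℝ) - ((τ : ℝ) - 1) / ((max 1 (s - 1) : ℕ) : ℝ)) *
                  (((ω' j : ℝ) - 1) / (ω' j : ℝ)) * (ω j : ℝ)) * (A j p) ^ 2) *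
          (h p) ^ 2 := by
  set γ : ℝ := τ / s
  set β : ℝ := (τ - 1) / ((max 1 (s - 1) : ℕ) : ℝ)
  have hβ : 0 ≤ β := div_nonneg (by simpa using hτ) (Nat.cast_nonneg _)
  have hnnz (j : Fin n) :
      (∑ l, ∑ i, A j (l, i) * h (l, i)) ^ 2 ≤ ω j * ∑ l, ∑ i, (A j (l, i) * h (l, i)) ^ 2 := by
    simp only [← Fintype.sum_prod_type', hω j]
    exact sq_sum_le_card_mul_sum_sq_of_eq_zero _ fun p hp => by simp_all
  have hblocks (j : Fin n) :
      (∑ l, ∑ i, A j (l, i) * h (l, i)) ^ 2 ≤ ω' j * ∑ l, (∑ i, A j (l, i) * h (l, i)) ^ 2 := by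
    rw [hω' j]
    exact sq_sum_le_card_mul_sum_sq_of_eq_zero _ fun l hl => by simp_all
  have hω'_pos (j : Fin n) : (1 : ℝ) ≤ ω' j := by
    obtain ⟨p, hp⟩ := hrows j
    rw [Nat.one_le_cast, hω' j, Nat.one_le_iff_ne_zero, Ne, card_eq_zero]
    exact ne_empty_of_mem (mem_filter.2 ⟨mem_univ _, p.2, hp⟩)
  rw [← Nat.cast_pow, ← card_samplings, ← expect_eq_sum_div_card, expect_sum_comm]
  calc ∑ j, 𝔼 S ∈ samplings c s τ, (∑ p, A j p * restr S h p) ^ 2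
      ≤ ∑ j, γ * (1 + β * (ω j - 1) + (γ - β) * ((ω' j - 1) / ω' j) * ω j)
          * ∑ l, ∑ i, (A j (l, i) * h (l, i)) ^ 2 := by
        gcongr with j
        rw [expect_sq_sum_mul_restr hτs, ← div_mul_sub_one_div_max hτ hτs]
        exact row_second_moment_le hβ (sub_one_div_max_le_div hτs) (hω'_pos j) (hnnz j)
          (hblocks j)
    _ = _ := by
        simp only [Fintype.sum_prod_type, mul_sum, sum_mul]
        rw [sum_comm]
        refine sum_congr rfl fun l _ => ?_
        rw [sum_comm]
        refine sum_congr rfl fun i _ => sum_congr rfl fun j _ => ?_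
        ring

/-- the key inequality (8) of Theorem 2 of the paper.
Columns of the `n×d` matrix `A` are indexed by `(l,i) ∈ Fin c × Fin s`,
`d = c·s`, `s₁ = max(1,s−1)`.  With `ω_j` the number of nonzeros of row `j`,
`ω'_j` its number of active blocks,
`α*_j = 1 + (τ−1)(ω_j−1)/s₁ + (τ/s − (τ−1)/s₁)·((ω'_j−1)/ω'_j)·ω_j`, and
`D¹_ii = ∑_j α*_j A_{ji}²`, for every `h` the average over all distributed
samplings of `(h^Ŝ)ᵀAᵀA h^Ŝ` is at most `(τ/s)·∑_i D¹_ii h_i²`. -/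
theorem stmt_5 (c s τ : ℕ) (hc : 0 < c) (hs : 0 < s) (hτ : 1 ≤ τ) (hτs : τ ≤ s)
    (n : ℕ) (A : Matrix (Fin n) (Fin c × Fin s) ℝ)
    (hrows : ∀ j : Fin n, ∃ p : Fin c × Fin s, A j p ≠ 0)
    (ω ω' : Fin n → ℕ)
    (hω : ∀ j, ω j = (Finset.univ.filter fun p : Fin c × Fin s => A j p ≠ 0).card)
    (hω' : ∀ j, ω' j = (Finset.univ.filter fun l : Fin c => ∃ i : Fin s, A j (l, i) ≠ 0).card)
    (h : Fin c × Fin s → ℝ) :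
    (∑ S ∈ samplings c s τ,
        ∑ j : Fin n, (∑ p : Fin c × Fin s, A j p * restr S h p) ^ 2) /
        ((s.choose τ : ℝ) ^ c) ≤
      ((τ : ℝ) / (s : ℝ)) *
        ∑ p : Fin c × Fin s,
          (∑ j : Fin n,
            (1 + ((τ : ℝ) - 1) * ((ω j : ℝ) - 1) / ((max 1 (s - 1) : ℕ) : ℝ)
              + ((τ : ℝ) / (s : ℝ) - ((τ : ℝ) - 1) / ((max 1 (s - 1) : ℕ) : ℝ)) *
                  (((ω' j : ℝ) - 1) / (ω' j : ℝ)) * (ω j : ℝ)) * (A j p) ^ 2) *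
          (h p) ^ 2 :=
  stmt_5_general c s τ hτ hτs n A hrows ω ω' hω hω' h
end

section
/- Let A be an n×d real matrix with no zero rows and no zero columns. For each row j let ω_j be the number of nonzero entries of row j, for each column i set v_i = (∑_{j=1}^n ω_j A_{ji}²)/(∑_{j=1}^n A_{ji}²), and let σ̃ = max_i v_i. Then for every x ∈ ℝ^d: xᵀAᵀAx ≤ σ̃ · ∑_{i=1}^d (∑_{j=1}^n A_{ji}²) x_i². In particular, σ := max{xᵀAᵀAx : xᵀD^{AᵀA}x ≤ 1} satisfies σ ≤ σ̃. -/
open Finset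

/-- Lemma 6 of the paper. Let `A` be an `n×d` real matrix with
no zero rows and no zero columns, `ω_j` the number of nonzeros of row `j`,
`v_i = (∑_j ω_j A_{ji}²)/(∑_j A_{ji}²)` and `σ̃ = max_i v_i`.  Then for every
`x ∈ ℝ^d`, `xᵀAᵀAx ≤ σ̃ · ∑_i (∑_j A_{ji}²) x_i²`; in particular
`σ = sup{xᵀAᵀAx : xᵀD^{AᵀA}x ≤ 1}` satisfies `σ ≤ σ̃`. -/
theorem stmt_10 (n d : ℕ) (A : Matrix (Fin n) (Fin d) ℝ)
    (hrows : ∀ j : Fin n, ∃ i : Fin d, A j i ≠ 0)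
    (hcols : ∀ i : Fin d, ∃ j : Fin n, A j i ≠ 0)
    (σt : ℝ)
    (hσt : IsGreatest
      (Set.range fun i : Fin d =>
        (∑ j : Fin n, ((Finset.univ.filter fun i' : Fin d => A j i' ≠ 0).card : ℝ)
            * (A j i) ^ 2) / (∑ j : Fin n, (A j i) ^ 2)) σt) :
    (∀ x : Fin d → ℝ,
      ∑ j : Fin n, (∑ i : Fin d, A j i * x i) ^ 2 ≤
        σt * ∑ i : Fin d, (∑ j : Fin n, (A j i) ^ 2) * (x i) ^ 2) ∧
    sSup {y : ℝ | ∃ x : Fin d → ℝ,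
        (∑ i : Fin d, (∑ j : Fin n, (A j i) ^ 2) * (x i) ^ 2) ≤ 1 ∧
        y = ∑ j : Fin n, (∑ i : Fin d, A j i * x i) ^ 2} ≤ σt := by
  set ω : Fin n → ℝ := fun j => ((Finset.univ.filter fun i' : Fin d => A j i' ≠ 0).card : ℝ)
  have hcolpos : ∀ i : Fin d, 0 < ∑ j : Fin n, (A j i) ^ 2 := by
    intro i
    obtain ⟨j, hj⟩ := hcols i
    exact Finset.sum_pos' (fun k _ => sq_nonneg _) ⟨j, Finset.mem_univ j, by positivity⟩
  have hbound : ∀ i : Fin d,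
      (∑ j : Fin n, ω j * (A j i) ^ 2) ≤ σt * ∑ j : Fin n, (A j i) ^ 2 := by
    intro i
    have h := hσt.2 (Set.mem_range_self (f := fun i : Fin d =>
      (∑ j : Fin n, ω j * (A j i) ^ 2) / (∑ j : Fin n, (A j i) ^ 2)) i)
    rw [div_le_iff₀ (hcolpos i)] at h
    linarith [h]
  have key : ∀ x : Fin d → ℝ,
      ∑ j : Fin n, (∑ i : Fin d, A j i * x i) ^ 2 ≤
        σt * ∑ i : Fin d, (∑ j : Fin n, (A j i) ^ 2) * (x i) ^ 2 := by
    intro x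
    have row : ∀ j : Fin n,
        (∑ i : Fin d, A j i * x i) ^ 2 ≤ ω j * ∑ i : Fin d, (A j i) ^ 2 * (x i) ^ 2 := by
      intro j
      set S := (Finset.univ.filter fun i' : Fin d => A j i' ≠ 0)
      have h1 : (∑ i : Fin d, A j i * x i) = ∑ i ∈ S, A j i * x i := by
        rw [Finset.sum_filter_of_ne]
        intro i _ h
        intro hA; exact h (by rw [hA, zero_mul])
      have h2 : (∑ i ∈ S, A j i * x i) ^ 2 ≤ (S.card : ℝ) * ∑ i ∈ S, (A j i * x i) ^ 2 :=
        sq_sum_le_card_mul_sum_sq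
      have h3 : ∑ i ∈ S, (A j i * x i) ^ 2 ≤ ∑ i : Fin d, (A j i)^2 * (x i) ^ 2 := by
        rw [show (∑ i ∈ S, (A j i * x i) ^ 2) = ∑ i ∈ S, (A j i)^2 * (x i)^2 from
          Finset.sum_congr rfl fun i _ => by ring]
        exact Finset.sum_le_sum_of_subset_of_nonneg (Finset.subset_univ S)
          (fun i _ _ => by positivity)
      calc (∑ i : Fin d, A j i * x i) ^ 2 = (∑ i ∈ S, A j i * x i) ^ 2 := by rw [h1]
        _ ≤ (S.card : ℝ) * ∑ i ∈ S, (A j i * x i) ^ 2 := h2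
        _ ≤ ω j * ∑ i : Fin d, (A j i)^2 * (x i) ^ 2 := by
            apply mul_le_mul_of_nonneg_left h3 (by positivity)
    calc ∑ j : Fin n, (∑ i : Fin d, A j i * x i) ^ 2
        ≤ ∑ j : Fin n, ω j * ∑ i : Fin d, (A j i) ^ 2 * (x i) ^ 2 :=
          Finset.sum_le_sum fun j _ => row j
      _ = ∑ i : Fin d, (∑ j : Fin n, ω j * (A j i) ^ 2) * (x i) ^ 2 := by
          simp_rw [Finset.mul_sum, Finset.sum_mul]
          rw [Finset.sum_comm]
          exact Finset.sum_congr rfl fun i _ => Finset.sum_congr rfl fun j _ => by ring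
      _ ≤ ∑ i : Fin d, (σt * (∑ j : Fin n, (A j i) ^ 2)) * (x i) ^ 2 :=
          Finset.sum_le_sum fun i _ =>
            mul_le_mul_of_nonneg_right (hbound i) (sq_nonneg _)
      _ = σt * ∑ i : Fin d, (∑ j : Fin n, (A j i) ^ 2) * (x i) ^ 2 := by
          rw [Finset.mul_sum]
          exact Finset.sum_congr rfl fun i _ => by ring
  refine ⟨key, ?_⟩
  have hσ0 : 0 ≤ σt := by
    obtain ⟨i, hi⟩ := hσt.1
    have : 0 ≤ (∑ j : Fin n, ω j * (A j i) ^ 2) / (∑ j : Fin n, (A j i) ^ 2) := by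
      apply div_nonneg _ (hcolpos i).le
      exact Finset.sum_nonneg fun j _ => by positivity
    exact le_of_le_of_eq this hi
  apply Real.sSup_le _ hσ0
  rintro y ⟨x, hx1, rfl⟩
  calc ∑ j : Fin n, (∑ i : Fin d, A j i * x i) ^ 2
      ≤ σt * ∑ i : Fin d, (∑ j : Fin n, (A j i) ^ 2) * (x i) ^ 2 := key x
    _ ≤ σt * 1 := mul_le_mul_of_nonneg_left hx1 hσ0
    _ = σt := mul_one σt
end

section
/- Let A be an n×d real matrix with no zero rows, and for each row j let ω_j be the number of nonzero entries of row j. Then for every x ∈ ℝ^d: xᵀAᵀAx ≤ (max_{1≤j≤n} ω_j) · ∑_{i=1}^d (∑_{j=1}^n A_{ji}²) x_i². In particular, σ := max{xᵀAᵀAx : xᵀD^{AᵀA}x ≤ 1} satisfies σ ≤ max_j ω_j. -/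
open Finset

/-- bound (13) of the paper. Let `A` be an `n×d` real matrix
with no zero rows and `ω_j` the number of nonzeros of row `j`.  Then for every
`x ∈ ℝ^d`, `xᵀAᵀAx ≤ (max_j ω_j) · ∑_i (∑_j A_{ji}²) x_i²`; in particular
`σ = sup{xᵀAᵀAx : xᵀD^{AᵀA}x ≤ 1}` satisfies `σ ≤ max_j ω_j`. -/
theorem stmt_11 (n d : ℕ) (A : Matrix (Fin n) (Fin d) ℝ)
    (hrows : ∀ j : Fin n, ∃ i : Fin d, A j i ≠ 0)
    (W : ℝ)
    (hW : IsGreatest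
      (Set.range fun j : Fin n =>
        ((Finset.univ.filter fun i : Fin d => A j i ≠ 0).card : ℝ)) W) :
    (∀ x : Fin d → ℝ,
      ∑ j : Fin n, (∑ i : Fin d, A j i * x i) ^ 2 ≤
        W * ∑ i : Fin d, (∑ j : Fin n, (A j i) ^ 2) * (x i) ^ 2) ∧
    sSup {y : ℝ | ∃ x : Fin d → ℝ,
        (∑ i : Fin d, (∑ j : Fin n, (A j i) ^ 2) * (x i) ^ 2) ≤ 1 ∧
        y = ∑ j : Fin n, (∑ i : Fin d, A j i * x i) ^ 2} ≤ W := by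
  obtain ⟨⟨j₀, hj₀⟩, hub⟩ := hW
  have hWnn : 0 ≤ W := hj₀ ▸ Nat.cast_nonneg _
  have main : ∀ x : Fin d → ℝ,
      ∑ j : Fin n, (∑ i : Fin d, A j i * x i) ^ 2 ≤
        W * ∑ i : Fin d, (∑ j : Fin n, (A j i) ^ 2) * (x i) ^ 2 := by
    intro x
    have key : ∀ j : Fin n,
        (∑ i : Fin d, A j i * x i) ^ 2 ≤ W * ∑ i : Fin d, (A j i) ^ 2 * (x i) ^ 2 := by
      intro j
      set s : Finset (Fin d) := Finset.univ.filter fun i => A j i ≠ 0 with hs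
      have hres : ∑ i : Fin d, A j i * x i = ∑ i ∈ s, A j i * x i := by
        rw [Finset.sum_filter]
        refine Finset.sum_congr rfl fun i _ => ?_
        by_cases h : A j i = 0 <;> simp [h]
      have hCS : (∑ i ∈ s, A j i * x i) ^ 2 ≤
          (s.card : ℝ) * ∑ i ∈ s, (A j i * x i) ^ 2 :=
        sq_sum_le_card_mul_sum_sq
      have hcard : (s.card : ℝ) ≤ W := hub ⟨j, rfl⟩
      have hsub : ∑ i ∈ s, (A j i * x i) ^ 2 ≤ ∑ i : Fin d, (A j i) ^ 2 * (x i) ^ 2 := by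
        have := Finset.sum_le_sum_of_subset_of_nonneg (s.subset_univ)
          (fun i _ _ => sq_nonneg (A j i * x i))
        calc ∑ i ∈ s, (A j i * x i) ^ 2 ≤ ∑ i : Fin d, (A j i * x i) ^ 2 := this
          _ = ∑ i : Fin d, (A j i) ^ 2 * (x i) ^ 2 := by
            refine Finset.sum_congr rfl fun i _ => by ring
      calc (∑ i : Fin d, A j i * x i) ^ 2
          = (∑ i ∈ s, A j i * x i) ^ 2 := by rw [hres]
        _ ≤ (s.card : ℝ) * ∑ i ∈ s, (A j i * x i) ^ 2 := hCS
        _ ≤ W * ∑ i : Fin d, (A j i) ^ 2 * (x i) ^ 2 := by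
            apply mul_le_mul hcard hsub (Finset.sum_nonneg fun i _ => sq_nonneg _) hWnn
    calc ∑ j : Fin n, (∑ i : Fin d, A j i * x i) ^ 2
        ≤ ∑ j : Fin n, W * ∑ i : Fin d, (A j i) ^ 2 * (x i) ^ 2 :=
          Finset.sum_le_sum fun j _ => key j
      _ = W * ∑ i : Fin d, (∑ j : Fin n, (A j i) ^ 2) * (x i) ^ 2 := by
          rw [← Finset.mul_sum, Finset.sum_comm]
          congr 1
          refine Finset.sum_congr rfl fun i _ => by rw [Finset.sum_mul]
  refine ⟨main, ?_⟩
  apply Real.sSup_le ?_ hWnn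
  rintro y ⟨x, hx1, rfl⟩
  calc ∑ j : Fin n, (∑ i : Fin d, A j i * x i) ^ 2
      ≤ W * ∑ i : Fin d, (∑ j : Fin n, (A j i) ^ 2) * (x i) ^ 2 := main x
    _ ≤ W * 1 := mul_le_mul_of_nonneg_left hx1 hWnn
    _ = W := mul_one W
end

section
/- Let τ, s be integers with 2 ≤ τ ≤ s, let A be an n×d real matrix with no zero rows and no zero columns, let ω_j be the number of nonzeros of row j, v_i = (∑_j ω_j A_{ji}²)/(∑_j A_{ji}²), and σ̃ = max_i v_i. Define D⁴_ii = (τ/(τ−1))·(1 + (σ̃−1)(τ−1)/(s−1))·∑_j A_{ji}² and D³_ii = 2·(1 + (τ−1)(max_j ω_j − 1)/(s−1))·∑_j A_{ji}². Then D⁴_ii ≤ D³_ii for every column i. -/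
open Finset

/-- part of the comparison Lemma of Section 6. For integers
`2 ≤ τ ≤ s` and an `n×d` real matrix `A` with no zero rows and no zero columns,
with `ω_j` the number of nonzeros of row `j`, `v_i = (∑_j ω_j A_{ji}²)/(∑_j A_{ji}²)`,
`σ̃ = max_i v_i`, the new easily computable stepsizes
`D⁴_ii = (τ/(τ−1))·(1 + (σ̃−1)(τ−1)/(s−1))·∑_j A_{ji}²` are no larger than
`D³_ii = 2·(1 + (τ−1)(max_j ω_j − 1)/(s−1))·∑_j A_{ji}²`. -/
theorem stmt_12 (τ s : ℤ) (hτ : 2 ≤ τ) (hτs : τ ≤ s)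
    (n d : ℕ) (A : Matrix (Fin n) (Fin d) ℝ)
    (hrows : ∀ j : Fin n, ∃ i : Fin d, A j i ≠ 0)
    (hcols : ∀ i : Fin d, ∃ j : Fin n, A j i ≠ 0)
    (σt : ℝ)
    (hσt : IsGreatest
      (Set.range fun i : Fin d =>
        (∑ j : Fin n, ((Finset.univ.filter fun i' : Fin d => A j i' ≠ 0).card : ℝ)
            * (A j i) ^ 2) / (∑ j : Fin n, (A j i) ^ 2)) σt)
    (W : ℝ)
    (hW : IsGreatest
      (Set.range fun j : Fin n =>
        ((Finset.univ.filter fun i : Fin d => A j i ≠ 0).card : ℝ)) W) :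
    ∀ i : Fin d,
      ((τ : ℝ) / ((τ : ℝ) - 1)) * (1 + (σt - 1) * ((τ : ℝ) - 1) / ((s : ℝ) - 1)) *
          ∑ j : Fin n, (A j i) ^ 2 ≤
        2 * (1 + ((τ : ℝ) - 1) * (W - 1) / ((s : ℝ) - 1)) *
          ∑ j : Fin n, (A j i) ^ 2 := by
  intro i
  have ht : (2:ℝ) ≤ (τ:ℝ) := by exact_mod_cast hτ
  have hs : (2:ℝ) ≤ (s:ℝ) := le_trans ht (by exact_mod_cast hτs)
  have ht1 : (0:ℝ) < (τ:ℝ) - 1 := by linarith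
  have hs1 : (0:ℝ) < (s:ℝ) - 1 := by linarith
  -- each column sum is positive
  have hSpos : ∀ i' : Fin d, 0 < ∑ j : Fin n, (A j i') ^ 2 := by
    intro i'
    obtain ⟨j, hj⟩ := hcols i'
    exact Finset.sum_pos' (fun j' _ => sq_nonneg _)
      ⟨j, Finset.mem_univ j, by positivity⟩
  -- each row count is at least 1
  have hω : ∀ j : Fin n,
      (1:ℝ) ≤ ((Finset.univ.filter fun i' : Fin d => A j i' ≠ 0).card : ℝ) := by
    intro j
    obtain ⟨i', hi'⟩ := hrows j
    have : 0 < (Finset.univ.filter fun i'' : Fin d => A j i'' ≠ 0).card :=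
      Finset.card_pos.mpr ⟨i', by simp [hi']⟩
    exact_mod_cast this
  -- each v_i is at least 1
  have hv1 : ∀ i' : Fin d,
      (1:ℝ) ≤ (∑ j : Fin n, ((Finset.univ.filter fun i'' : Fin d => A j i'' ≠ 0).card : ℝ)
            * (A j i') ^ 2) / (∑ j : Fin n, (A j i') ^ 2) := by
    intro i'
    rw [le_div_iff₀ (hSpos i'), one_mul]
    apply Finset.sum_le_sum
    intro j _
    exact le_mul_of_one_le_left (sq_nonneg _) (hω j)
  -- each v_i is at most W
  have hvW : ∀ i' : Fin d,
      (∑ j : Fin n, ((Finset.univ.filter fun i'' : Fin d => A j i'' ≠ 0).card : ℝ)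
            * (A j i') ^ 2) / (∑ j : Fin n, (A j i') ^ 2) ≤ W := by
    intro i'
    rw [div_le_iff₀ (hSpos i'), Finset.mul_sum]
    apply Finset.sum_le_sum
    intro j _
    exact mul_le_mul_of_nonneg_right (hW.2 (Set.mem_range_self j)) (sq_nonneg _)
  have hσ1 : 1 ≤ σt := le_trans (hv1 i) (hσt.2 (Set.mem_range_self i))
  have hσW : σt ≤ W := by
    obtain ⟨i', hi'⟩ := hσt.1
    rw [← hi']; exact hvW i'
  have hc : (τ:ℝ)/((τ:ℝ)-1) ≤ 2 := by rw [div_le_iff₀ ht1]; linarith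
  have hab : (σt-1)*((τ:ℝ)-1)/((s:ℝ)-1) ≤ ((τ:ℝ)-1)*(W-1)/((s:ℝ)-1) := by
    have h : (σt-1)*((τ:ℝ)-1) ≤ ((τ:ℝ)-1)*(W-1) := by nlinarith
    exact div_le_div_of_nonneg_right h hs1.le
  have ha0 : 0 ≤ (σt-1)*((τ:ℝ)-1)/((s:ℝ)-1) :=
    div_nonneg (mul_nonneg (by linarith) ht1.le) hs1.le
  apply mul_le_mul_of_nonneg_right _ (hSpos i).le
  apply mul_le_mul hc (by linarith) (by linarith) (by norm_num)
end

section
/- Let c, s, τ be integers with 2 ≤ τ ≤ s and c ≥ 1, set d = c·s, and let A be an n×d real matrix with no zero rows and no zero columns, with columns indexed by pairs (l,i) ∈ {1,…,c}×{1,…,s} (c blocks of size s). For each row j let ω_j be its number of nonzeros, ω'_j the number of blocks containing a nonzero of row j, and α*_j = 1 + (τ−1)(ω_j−1)/(s−1) + (τ/s − (τ−1)/(s−1))·((ω'_j−1)/ω'_j)·ω_j. Let v_i = (∑_j ω_j A_{ji}²)/(∑_j A_{ji}²), σ̃ = max_i v_i, D¹_ii = ∑_j α*_j A_{ji}² and D⁴_ii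 = (τ/(τ−1))·(1 + (σ̃−1)(τ−1)/(s−1))·∑_j A_{ji}². Then D¹_ii ≤ D⁴_ii for every column i. -/
open Finset

/-- part of the comparison Lemma of Section 6. Columns are
indexed by pairs `(l,i) ∈ Fin c × Fin s` (`c` blocks of size `s`, `d = c·s`).
For integers `2 ≤ τ ≤ s`, `c ≥ 1` and an `n×d` real matrix `A` with no zero rows
and no zero columns, with `ω_j` the nonzeros of row `j`, `ω'_j` the number of
blocks containing a nonzero of row `j`,
`α*_j = 1 + (τ−1)(ω_j−1)/(s−1) + (τ/s − (τ−1)/(s−1))·((ω'_j−1)/ω'_j)·ω_j`,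
`v_i = (∑_j ω_j A_{ji}²)/(∑_j A_{ji}²)`, `σ̃ = max_i v_i`, the new stepsizes
`D¹_ii = ∑_j α*_j A_{ji}²` are no larger than
`D⁴_ii = (τ/(τ−1))·(1 + (σ̃−1)(τ−1)/(s−1))·∑_j A_{ji}²`. -/
theorem stmt_13 (c s τ : ℕ) (hc : 1 ≤ c) (hτ : 2 ≤ τ) (hτs : τ ≤ s)
    (n : ℕ) (A : Matrix (Fin n) (Fin c × Fin s) ℝ)
    (hrows : ∀ j : Fin n, ∃ p : Fin c × Fin s, A j p ≠ 0)
    (hcols : ∀ p : Fin c × Fin s, ∃ j : Fin n, A j p ≠ 0)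
    (ω ω' : Fin n → ℕ)
    (hω : ∀ j, ω j = (Finset.univ.filter fun p : Fin c × Fin s => A j p ≠ 0).card)
    (hω' : ∀ j, ω' j = (Finset.univ.filter fun l : Fin c => ∃ i : Fin s, A j (l, i) ≠ 0).card)
    (σt : ℝ)
    (hσt : IsGreatest
      (Set.range fun p : Fin c × Fin s =>
        (∑ j : Fin n, (ω j : ℝ) * (A j p) ^ 2) / (∑ j : Fin n, (A j p) ^ 2)) σt) :
    ∀ p : Fin c × Fin s,
      (∑ j : Fin n,
          (1 + ((τ : ℝ) - 1) * ((ω j : ℝ) - 1) / ((s : ℝ) - 1)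
            + ((τ : ℝ) / (s : ℝ) - ((τ : ℝ) - 1) / ((s : ℝ) - 1)) *
                (((ω' j : ℝ) - 1) / (ω' j : ℝ)) * (ω j : ℝ)) * (A j p) ^ 2) ≤
        ((τ : ℝ) / ((τ : ℝ) - 1)) * (1 + (σt - 1) * ((τ : ℝ) - 1) / ((s : ℝ) - 1)) *
          ∑ j : Fin n, (A j p) ^ 2 := by
  intro p
  have hs2 : 2 ≤ s := le_trans hτ hτs
  have hτR : (2:ℝ) ≤ (τ:ℝ) := by exact_mod_cast hτ
  have hsR : (2:ℝ) ≤ (s:ℝ) := by exact_mod_cast hs2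
  have hτsR : (τ:ℝ) ≤ (s:ℝ) := by exact_mod_cast hτs
  have hτ1 : (0:ℝ) < (τ:ℝ) - 1 := by linarith
  have hs1 : (0:ℝ) < (s:ℝ) - 1 := by linarith
  have hs0 : (0:ℝ) < (s:ℝ) := by linarith
  have hS : 0 < ∑ j : Fin n, (A j p)^2 := by
    obtain ⟨j, hj⟩ := hcols p
    exact Finset.sum_pos' (fun i _ => sq_nonneg _) ⟨j, Finset.mem_univ _, by positivity⟩
  have hσ : (∑ j : Fin n, (ω j : ℝ) * (A j p)^2) ≤ σt * ∑ j : Fin n, (A j p)^2 := by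
    have h := hσt.2 ⟨p, rfl⟩
    rwa [div_le_iff₀ hS] at h
  -- δ ≥ 0
  have hδ : (0:ℝ) ≤ (τ:ℝ)/(s:ℝ) - ((τ:ℝ)-1)/((s:ℝ)-1) := by
    rw [sub_nonneg, div_le_div_iff₀ hs1 hs0]
    nlinarith
  -- pointwise bound
  have hpt : ∀ j : Fin n,
      (1 + ((τ:ℝ)-1)*((ω j:ℝ)-1)/((s:ℝ)-1)
        + ((τ:ℝ)/(s:ℝ) - ((τ:ℝ)-1)/((s:ℝ)-1)) * (((ω' j:ℝ)-1)/(ω' j:ℝ)) * (ω j:ℝ))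
      ≤ (τ:ℝ)/((τ:ℝ)-1) + (τ:ℝ)*((ω j:ℝ)-1)/((s:ℝ)-1) := by
    intro j
    have hω'1 : 1 ≤ ω' j := by
      obtain ⟨q, hq⟩ := hrows j
      rw [hω' j]
      exact Finset.card_pos.mpr ⟨q.1, Finset.mem_filter.mpr ⟨Finset.mem_univ _, ⟨q.2, by rwa [Prod.mk.eta]⟩⟩⟩
    have hω'R : (1:ℝ) ≤ (ω' j : ℝ) := by exact_mod_cast hω'1
    have hωj1 : 1 ≤ ω j := by
      obtain ⟨q, hq⟩ := hrows j
      rw [hω j]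
      exact Finset.card_pos.mpr ⟨q, Finset.mem_filter.mpr ⟨Finset.mem_univ q, hq⟩⟩
    have hωR : (1:ℝ) ≤ (ω j : ℝ) := by exact_mod_cast hωj1
    have hω0 : (0:ℝ) ≤ (ω j : ℝ) := by linarith
    have hf1 : ((ω' j:ℝ)-1)/(ω' j:ℝ) ≤ 1 := by
      rw [div_le_one (by linarith)]; linarith
    have hstep1 : ((τ:ℝ)/(s:ℝ) - ((τ:ℝ)-1)/((s:ℝ)-1)) * (((ω' j:ℝ)-1)/(ω' j:ℝ)) * (ω j:ℝ)
        ≤ ((τ:ℝ)/(s:ℝ) - ((τ:ℝ)-1)/((s:ℝ)-1)) * (ω j:ℝ) := by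
      have := mul_le_of_le_one_right hδ hf1
      exact mul_le_mul_of_nonneg_right this hω0
    have hstep2 : ((τ:ℝ)/(s:ℝ) - ((τ:ℝ)-1)/((s:ℝ)-1)) * (ω j:ℝ)
        ≤ 1/((τ:ℝ)-1) + ((ω j:ℝ)-1)/((s:ℝ)-1) := by
      rw [div_sub_div _ _ hs0.ne' hs1.ne', div_mul_eq_mul_div,
        div_add_div _ _ hτ1.ne' hs1.ne', div_le_div_iff₀ (by positivity) (by positivity)]
      nlinarith [mul_nonneg hs1.le (mul_nonneg hs0.le (sub_nonneg.mpr hτsR)),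
        mul_nonneg hs1.le (mul_nonneg (mul_nonneg (by positivity : (0:ℝ) ≤ (τ:ℝ)) hω0) hτ1.le)]
    have heq : 1 + ((τ:ℝ)-1)*((ω j:ℝ)-1)/((s:ℝ)-1) + (1/((τ:ℝ)-1) + ((ω j:ℝ)-1)/((s:ℝ)-1))
        = (τ:ℝ)/((τ:ℝ)-1) + (τ:ℝ)*((ω j:ℝ)-1)/((s:ℝ)-1) := by
      field_simp
      ring
    linarith
  have hsum : (∑ j : Fin n,
      (1 + ((τ:ℝ)-1)*((ω j:ℝ)-1)/((s:ℝ)-1)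
        + ((τ:ℝ)/(s:ℝ) - ((τ:ℝ)-1)/((s:ℝ)-1)) * (((ω' j:ℝ)-1)/(ω' j:ℝ)) * (ω j:ℝ)) * (A j p)^2)
      ≤ ∑ j : Fin n, ((τ:ℝ)/((τ:ℝ)-1) + (τ:ℝ)*((ω j:ℝ)-1)/((s:ℝ)-1)) * (A j p)^2 :=
    Finset.sum_le_sum fun j _ => mul_le_mul_of_nonneg_right (hpt j) (sq_nonneg _)
  refine le_trans hsum ?_
  have hexp : ∑ j : Fin n, ((τ:ℝ)/((τ:ℝ)-1) + (τ:ℝ)*((ω j:ℝ)-1)/((s:ℝ)-1)) * (A j p)^2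
      = ((τ:ℝ)/((τ:ℝ)-1)) * (∑ j : Fin n, (A j p)^2)
        + ((τ:ℝ)/((s:ℝ)-1)) * (∑ j : Fin n, (ω j:ℝ) * (A j p)^2)
        - ((τ:ℝ)/((s:ℝ)-1)) * (∑ j : Fin n, (A j p)^2) := by
    rw [Finset.mul_sum, Finset.mul_sum, Finset.mul_sum, ← Finset.sum_add_distrib,
      ← Finset.sum_sub_distrib]
    refine Finset.sum_congr rfl fun j _ => ?_
    field_simp
    ring
  rw [hexp]
  have hrhs : ((τ:ℝ)/((τ:ℝ)-1)) * (1 + (σt-1)*((τ:ℝ)-1)/((s:ℝ)-1)) * (∑ j : Fin n, (A j p)^2)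
      = ((τ:ℝ)/((τ:ℝ)-1)) * (∑ j : Fin n, (A j p)^2)
        + ((τ:ℝ)/((s:ℝ)-1)) * (σt * ∑ j : Fin n, (A j p)^2)
        - ((τ:ℝ)/((s:ℝ)-1)) * (∑ j : Fin n, (A j p)^2) := by
    field_simp
    ring
  rw [hrhs]
  have hc2 : (0:ℝ) ≤ (τ:ℝ)/((s:ℝ)-1) := by positivity
  have := mul_le_mul_of_nonneg_left hσ hc2
  linarith
end

section
/- Let τ, s be integers with 2 ≤ τ ≤ s, and let σ, σ', σ̃ be real numbers satisfying 1 ≤ σ ≤ σ̃ ≤ s and σ' ≥ 1. Define β* = 1 + (τ−1)(σ−1)/(s−1) + (τ/s − (τ−1)/(s−1))·((σ'−1)/σ')·σ. Then β* ≤ (τ/(τ−1))·(1 + (σ̃−1)(τ−1)/(s−1)). Consequently, with D²_ii = β*·∑_j A_{ji}² and D⁴_ii = (τ/(τ−1))·(1 + (σ̃−1)(τ−1)/(s−1))·∑_j A_{ji}² for an n×d matrix A, one has D²_ii ≤ D⁴_ii for every i. -/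
open Finset

lemma stmt_14_aux (t S σ σt σ' : ℝ) (ht : 2 ≤ t) (hts : t ≤ S)
    (hσ1 : 1 ≤ σ) (hσσt : σ ≤ σt) (_hσts : σt ≤ S) (hσ' : 1 ≤ σ') :
    1 + (t - 1) * (σ - 1) / (S - 1)
        + (t / S - (t - 1) / (S - 1)) * ((σ' - 1) / σ') * σ ≤
      (t / (t - 1)) * (1 + (σt - 1) * (t - 1) / (S - 1)) := by
  have hS1 : (0:ℝ) < S - 1 := by linarith
  have hS : (0:ℝ) < S := by linarith
  have ht1 : (0:ℝ) < t - 1 := by linarith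
  have hσ'0 : (0:ℝ) < σ' := by linarith
  have hfac : t / S - (t - 1) / (S - 1) = (S - t) / (S * (S - 1)) := by
    field_simp; ring
  rw [hfac]
  have hratio : (σ' - 1) / σ' ≤ 1 := by
    rw [div_le_one hσ'0]; linarith
  have hst : (0:ℝ) ≤ (S - t) / (S * (S - 1)) := div_nonneg (by linarith) (by positivity)
  have step1 : (S - t) / (S * (S - 1)) * ((σ' - 1) / σ') * σ ≤
      (S - t) / (S * (S - 1)) * σt := by
    calc (S - t) / (S * (S - 1)) * ((σ' - 1) / σ') * σ
        ≤ (S - t) / (S * (S - 1)) * 1 * σ := by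
          apply mul_le_mul_of_nonneg_right _ (by linarith)
          exact mul_le_mul_of_nonneg_left hratio hst
      _ = (S - t) / (S * (S - 1)) * σ := by ring
      _ ≤ (S - t) / (S * (S - 1)) * σt := mul_le_mul_of_nonneg_left hσσt hst
  have step2 : (t - 1) * (σ - 1) / (S - 1) ≤ (t - 1) * (σt - 1) / (S - 1) := by
    apply div_le_div_of_nonneg_right _ hS1.le
    nlinarith
  have key : 1 + (t - 1) * (σt - 1) / (S - 1) + (S - t) / (S * (S - 1)) * σt ≤
      (t / (t - 1)) * (1 + (σt - 1) * (t - 1) / (S - 1)) := by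
    rw [div_mul_eq_mul_div, ← sub_nonneg]
    have hpoly : (S - t) * (t - 1) * σt ≤ S * (S - 1) + S * (σt - 1) * (t - 1) := by
      nlinarith [mul_nonneg (mul_nonneg ht1.le (by linarith : (0:ℝ) ≤ t)) (by linarith : (0:ℝ) ≤ σt - 1),
        mul_nonneg (by linarith : (0:ℝ) ≤ S - t) (by linarith : (0:ℝ) ≤ S - 1)]
    have : (t / (t - 1)) * (1 + (σt - 1) * (t - 1) / (S - 1))
        - (1 + (t - 1) * (σt - 1) / (S - 1) + (S - t) * σt / (S * (S - 1)))
        = (S * (S - 1) + S * (σt - 1) * (t - 1) - (S - t) * (t - 1) * σt)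
            / ((t - 1) * (S * (S - 1))) := by
      field_simp; ring
    rw [this]
    exact div_nonneg (by linarith) (by positivity)
  linarith

/-- combining Lemmas 5 and 6 into the comparison `D² ≤ D⁴`.
For integers `2 ≤ τ ≤ s` and reals `1 ≤ σ ≤ σ̃ ≤ s`, `σ' ≥ 1`, with
`β* = 1 + (τ−1)(σ−1)/(s−1) + (τ/s − (τ−1)/(s−1))·((σ'−1)/σ')·σ`, one has
`β* ≤ (τ/(τ−1))·(1 + (σ̃−1)(τ−1)/(s−1))`; consequently, for any `n×d` real
matrix `A`, `D²_ii = β*·∑_j A_{ji}² ≤ D⁴_ii = (τ/(τ−1))·(1 + (σ̃−1)(τ−1)/(s−1))·∑_j A_{ji}²`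
for every column `i`. -/
theorem stmt_14 (τ s : ℤ) (hτ : 2 ≤ τ) (hτs : τ ≤ s)
    (σ σt σ' : ℝ) (hσ1 : 1 ≤ σ) (hσσt : σ ≤ σt) (hσts : σt ≤ (s : ℝ)) (hσ' : 1 ≤ σ') :
    (1 + ((τ : ℝ) - 1) * (σ - 1) / ((s : ℝ) - 1)
        + ((τ : ℝ) / (s : ℝ) - ((τ : ℝ) - 1) / ((s : ℝ) - 1)) * ((σ' - 1) / σ') * σ ≤
      ((τ : ℝ) / ((τ : ℝ) - 1)) * (1 + (σt - 1) * ((τ : ℝ) - 1) / ((s : ℝ) - 1))) ∧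
    ∀ (n d : ℕ) (A : Matrix (Fin n) (Fin d) ℝ) (i : Fin d),
      (1 + ((τ : ℝ) - 1) * (σ - 1) / ((s : ℝ) - 1)
          + ((τ : ℝ) / (s : ℝ) - ((τ : ℝ) - 1) / ((s : ℝ) - 1)) * ((σ' - 1) / σ') * σ) *
          ∑ j : Fin n, (A j i) ^ 2 ≤
        ((τ : ℝ) / ((τ : ℝ) - 1)) * (1 + (σt - 1) * ((τ : ℝ) - 1) / ((s : ℝ) - 1)) *
          ∑ j : Fin n, (A j i) ^ 2 := by
  have ht : (2:ℝ) ≤ (τ : ℝ) := by exact_mod_cast hτ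
  have hts : (τ : ℝ) ≤ (s : ℝ) := by exact_mod_cast hτs
  have main := stmt_14_aux (τ : ℝ) (s : ℝ) σ σt σ' ht hts hσ1 hσσt hσts hσ'
  exact ⟨main, fun n d A i =>
    mul_le_mul_of_nonneg_right main (Finset.sum_nonneg fun j _ => sq_nonneg _)⟩
end
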